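/- With a single FRSC of window λ and fraction C, the miner's total per-block reward rewardT_H = ν_{H−1}/λ + M·F_H is a convex combination smoothing of past fees: if all past fees lie in an interval [F_min, F_max] and ν_0 ∈ [C·λ·F_min, C·λ·F_max], then rewardT_H ∈ [F_min, F_max] for all H. -/

import Mathlib

/-! For a constant fee `F` the state `C·λ·F` is a fixed point of the update
`ν ↦ ν·(1 − 1/λ) + C·F`, and the update is monotone in both `ν` and the fee (as `λ ≥ 1`,
`C ≥ 0`), so the interval between the fixed points for `F_min` and `F_max` is invariant.
The reward `ν/λ + (1 − C)·F` is monotone too and equals `F` at the fixed point `ν = C·λ·F`. -/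

open Set

section FRSC

variable {l C a b x f : ℝ}

theorem frsc_update_mem_Icc (hl : 1 ≤ l) (hC : 0 ≤ C)
    (hx : x ∈ Icc (C * l * a) (C * l * b)) (hf : f ∈ Icc a b) :
    x * (1 - 1 / l) + C * f ∈ Icc (C * l * a) (C * l * b) := by
  have hcoef : 0 ≤ 1 - 1 / l := sub_nonneg.2 ((div_le_one (by linarith)).2 hl)
  have hfix : ∀ F, C * l * F * (1 - 1 / l) + C * F = C * l * F := fun F => by
    field_simp
    ring
  constructor
  · calc C * l * a = C * l * a * (1 - 1 / l) + C * a := (hfix a).symm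
      _ ≤ x * (1 - 1 / l) + C * f := by gcongr; exacts [hx.1, hf.1]
  · calc x * (1 - 1 / l) + C * f ≤ C * l * b * (1 - 1 / l) + C * b := by
          gcongr; exacts [hx.2, hf.2]
      _ = C * l * b := hfix b

theorem frsc_reward_mem_Icc (hl : 0 < l) (hC : C ≤ 1)
    (hx : x ∈ Icc (C * l * a) (C * l * b)) (hf : f ∈ Icc a b) :
    x / l + (1 - C) * f ∈ Icc a b := by
  have hM : 0 ≤ 1 - C := sub_nonneg.2 hC
  have hfix : ∀ F, C * l * F / l + (1 - C) * F = F := fun F => by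
    field_simp
    ring
  constructor
  · calc a = C * l * a / l + (1 - C) * a := (hfix a).symm
      _ ≤ x / l + (1 - C) * f := by gcongr; exacts [hx.1, hf.1]
  · calc x / l + (1 - C) * f ≤ C * l * b / l + (1 - C) * b := by
          gcongr; exacts [hx.2, hf.2]
      _ = b := hfix b

end FRSC

/-- FRSC smoothing: with window `λ ≥ 1`, `C ∈ [0,1]`, `M = 1 − C`, fee sequence
bounded in `[F_min, F_max]`, state update `ν_H = ν_{H−1}·(1 − 1/λ) + C·F_H`, and
initial state `ν_0 ∈ [C·λ·F_min, C·λ·F_max]`, the state stays in that interval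
and the miner's per-block reward `ν_{H−1}/λ + M·F_H` lies in `[F_min, F_max]`. -/
theorem frsc_reward_bounded
    (l C M Fmin Fmax : ℝ) (hl : 1 ≤ l)
    (hC0 : 0 ≤ C) (hC1 : C ≤ 1) (hM : M = 1 - C)
    (F : ℕ → ℝ) (hF : ∀ H, Fmin ≤ F H ∧ F H ≤ Fmax)
    (ν : ℕ → ℝ)
    (hν0 : C * l * Fmin ≤ ν 0 ∧ ν 0 ≤ C * l * Fmax)
    (hrec : ∀ H : ℕ, ν (H + 1) = ν H * (1 - 1 / l) + C * F (H + 1)) :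
    (∀ H : ℕ, C * l * Fmin ≤ ν H ∧ ν H ≤ C * l * Fmax) ∧
    (∀ H : ℕ, Fmin ≤ ν H / l + M * F (H + 1) ∧
      ν H / l + M * F (H + 1) ≤ Fmax) := by
  subst hM
  have hstate : ∀ H, ν H ∈ Icc (C * l * Fmin) (C * l * Fmax) := by
    intro H
    induction H with
    | zero => exact hν0
    | succ n ih =>
      rw [hrec n]
      exact frsc_update_mem_Icc hl hC0 ih (hF (n + 1))
  exact ⟨hstate, fun H => frsc_reward_mem_Icc (by linarith) hC1 (hstate H) (hF (H + 1))⟩
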